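/- Exponential decay of the Lyapunov function: Let k₃ > 0 and k₄ > 0 be real numbers and let e₃, e₄ : ℝ → ℝ be differentiable functions satisfying e₃'(t) = e₄(t) − k₃·e₃(t) and e₄'(t) = −e₃(t) − k₄·e₄(t) for all t. Then for all t ≥ 0, e₃(t)² + e₄(t)² ≤ (e₃(0)² + e₄(0)²)·exp(−2·min(k₃,k₄)·t). -/

import Mathlib

/-! Along the system, `V = e₃² + e₄²` has `V' = -2 (k₃ e₃² + k₄ e₄²) ≤ -2 min(k₃, k₄) V`: the
cross terms `±2 e₃ e₄` cancel. Grönwall's inequality with zero forcing term then gives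
`V t ≤ V 0 · exp (-2 min(k₃, k₄) t)`. -/

open Real Set

theorem le_mul_exp_of_hasDerivWithinAt_le_mul {f f' : ℝ → ℝ} {K a b : ℝ}
    (hf : ContinuousOn f (Icc a b))
    (hf' : ∀ x ∈ Ico a b, HasDerivWithinAt f (f' x) (Ici x) x)
    (bound : ∀ x ∈ Ico a b, f' x ≤ K * f x) :
    ∀ x ∈ Icc a b, f x ≤ f a * exp (K * (x - a)) := by
  simpa only [gronwallBound_ε0, add_zero] using
    le_gronwallBound_of_liminf_deriv_right_le (ε := 0) hf
      (fun x hx _ hr => (hf' x hx).liminf_right_slope_le hr) le_rfl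
      (by simpa only [add_zero] using bound)

theorem min_mul_add_le_mul_add_mul (a b x y : ℝ) :
    min a b * (x ^ 2 + y ^ 2) ≤ a * x ^ 2 + b * y ^ 2 := by
  nlinarith [min_le_left a b, min_le_right a b, sq_nonneg x, sq_nonneg y]

theorem hasDerivAt_sq_add_sq_of_closedLoop {k₃ k₄ : ℝ} {e₃ e₄ : ℝ → ℝ} {t : ℝ}
    (h₃ : HasDerivAt e₃ (e₄ t - k₃ * e₃ t) t) (h₄ : HasDerivAt e₄ (-e₃ t - k₄ * e₄ t) t) :
    HasDerivAt (fun s => e₃ s ^ 2 + e₄ s ^ 2) (-2 * (k₃ * e₃ t ^ 2 + k₄ * e₄ t ^ 2)) t := by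
  refine ((h₃.fun_pow 2).add (h₄.fun_pow 2)).congr_deriv ?_
  ring

theorem lyapunov_exponential_decay_general (k₃ k₄ : ℝ)
    (e₃ e₄ : ℝ → ℝ)
    (he₃ : Differentiable ℝ e₃) (he₄ : Differentiable ℝ e₄)
    (hd₃ : ∀ t, deriv e₃ t = e₄ t - k₃ * e₃ t)
    (hd₄ : ∀ t, deriv e₄ t = -e₃ t - k₄ * e₄ t) :
    ∀ t : ℝ, 0 ≤ t →
      e₃ t ^ 2 + e₄ t ^ 2 ≤
        (e₃ 0 ^ 2 + e₄ 0 ^ 2) * Real.exp (-2 * min k₃ k₄ * t) := by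
  intro t ht
  have hV : ∀ s, HasDerivAt (fun s => e₃ s ^ 2 + e₄ s ^ 2)
      (-2 * (k₃ * e₃ s ^ 2 + k₄ * e₄ s ^ 2)) s := fun s =>
    hasDerivAt_sq_add_sq_of_closedLoop (hd₃ s ▸ (he₃ s).hasDerivAt) (hd₄ s ▸ (he₄ s).hasDerivAt)
  have hdecay : ∀ s, -2 * (k₃ * e₃ s ^ 2 + k₄ * e₄ s ^ 2) ≤
      -2 * min k₃ k₄ * (e₃ s ^ 2 + e₄ s ^ 2) := fun s => by
    linarith [min_mul_add_le_mul_add_mul k₃ k₄ (e₃ s) (e₄ s)]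
  simpa only [sub_zero] using le_mul_exp_of_hasDerivWithinAt_le_mul
    (fun s _ => (hV s).continuousAt.continuousWithinAt)
    (fun s _ => (hV s).hasDerivWithinAt) (fun s _ => hdecay s) t ⟨ht, le_rfl⟩

/-- Exponential decay of the Lyapunov function: along the closed-loop error system
`ė₃ = e₄ − k₃e₃`, `ė₄ = −e₃ − k₄e₄` with `k₃, k₄ > 0`, for all `t ≥ 0`,
`e₃(t)² + e₄(t)² ≤ (e₃(0)² + e₄(0)²)·exp(−2·min(k₃,k₄)·t)`. -/
theorem lyapunov_exponential_decay (k₃ k₄ : ℝ) (hk₃ : 0 < k₃) (hk₄ : 0 < k₄)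
    (e₃ e₄ : ℝ → ℝ)
    (he₃ : Differentiable ℝ e₃) (he₄ : Differentiable ℝ e₄)
    (hd₃ : ∀ t, deriv e₃ t = e₄ t - k₃ * e₃ t)
    (hd₄ : ∀ t, deriv e₄ t = -e₃ t - k₄ * e₄ t) :
    ∀ t : ℝ, 0 ≤ t →
      e₃ t ^ 2 + e₄ t ^ 2 ≤
        (e₃ 0 ^ 2 + e₄ 0 ^ 2) * Real.exp (-2 * min k₃ k₄ * t) :=
  lyapunov_exponential_decay_general k₃ k₄ e₃ e₄ he₃ he₄ hd₃ hd₄
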